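/- arXiv:1006.5137 — 2 statements merged into one kernel-verified Lean document; each statement's English description precedes it below -/
import Mathlib

section
/- Let K = {x ∈ ℝⁿ : gⱼ(x) ≥ 0, j=1,…,m} be compact and convex with C¹ constraints gⱼ satisfying Slater's condition and nondegeneracy, and let f be convex C¹ with a unique global minimizer x* on K. For each μ > 0 let x_μ be any stationary point of the log-barrier φ_μ. Then x_μ → x* as μ → 0. -/
/-!
Let `x̄` be a cluster point of `x μ` as `μ → 0⁺`. By compactness of `K` and uniqueness of the
minimiser it suffices to show that `x̄` minimises `f` on `K`. Stationarity writes `∇f (x μ)` as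
a nonnegative combination of the `∇gⱼ (x μ)` with weights `μ / gⱼ (x μ)`, and the weights of the
constraints inactive at `x̄` tend to `0`. Hence `⟪∇f x̄, d⟫ ≥ 0` for every direction `d` with
`⟪∇gⱼ x̄, d⟫ > 0` for all active `j`; no bound on the active weights is needed, because their
terms are eventually nonnegative. An active `gⱼ` attains its minimum `0` on the convex set `K`
at `x̄`, so `⟪∇gⱼ x̄, y - x̄⟫ ≥ 0` for `y ∈ K`, and Slater's point `x₀` together with
nondegeneracy gives `⟪∇gⱼ x̄, x₀ - x̄⟫ > 0`. Thus `d = y - x̄ + t • (x₀ - x̄)` qualifies for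
`t > 0`; letting `t → 0` yields the variational inequality, and convexity of `f` concludes.
-/

open Filter Set Topology RealInnerProductSpace
open scoped Gradient

theorem mem_interior_setOf_forall_nonneg {X κ : Type*} [TopologicalSpace X] [Finite κ]
    {g : κ → X → ℝ} (hg : ∀ j, Continuous (g j)) {x₀ : X} (hx₀ : ∀ j, 0 < g j x₀) :
    x₀ ∈ interior {x | ∀ j, 0 ≤ g j x} := by
  have hopen : IsOpen {x | ∀ j, 0 < g j x} := by
    simp only [ofPred_forall]
    exact isOpen_iInter_of_finite fun j => isOpen_lt continuous_const (hg j)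
  exact interior_maximal (fun x hx j => (hx j).le) hopen hx₀

section

variable {E : Type*} [NormedAddCommGroup E] [InnerProductSpace ℝ E]

theorem ConvexOn.inner_gradient_sub_le [CompleteSpace E] {f : E → ℝ} {s : Set E}
    (hf : ConvexOn ℝ s f) {x y : E} (hx : x ∈ s) (hy : y ∈ s) (hfx : DifferentiableAt ℝ f x) :
    ⟪∇ f x, y - x⟫ ≤ f y - f x := by
  set L : ℝ →ᵃ[ℝ] E := AffineMap.lineMap x y
  have hline : ConvexOn ℝ (L ⁻¹' s) (f ∘ L) := hf.comp_affineMap L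
  have hderiv : HasDerivAt (f ∘ L) ⟪∇ f x, y - x⟫ 0 := by
    rw [inner_gradient_left]
    exact hfx.hasFDerivAt.comp_hasDerivAt_of_eq 0 AffineMap.hasDerivAt_lineMap
      (AffineMap.lineMap_apply_zero x y).symm
  simpa [slope_def_field, L] using
    hline.le_slope_of_hasDerivAt (by simpa [L] using hx) (by simpa [L] using hy) one_pos hderiv

theorem IsMinOn.inner_gradient_sub_nonneg [CompleteSpace E] {h : E → ℝ} {s : Set E} {z y : E}
    (hmin : IsMinOn h s z) (hs : Convex ℝ s) (hz : z ∈ s) (hy : y ∈ s)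
    (hhz : DifferentiableAt ℝ h z) : 0 ≤ ⟪∇ h z, y - z⟫ := by
  rw [inner_gradient_left]
  exact hmin.localize.hasFDerivWithinAt_nonneg hhz.hasFDerivAt.hasFDerivWithinAt
    (sub_mem_posTangentConeAt_of_segment_subset (hs.segment_subset hz hy))

theorem IsMinOn.inner_gradient_sub_pos [CompleteSpace E] {h : E → ℝ} {s : Set E} {z x₀ : E}
    (hmin : IsMinOn h s z) (hs : Convex ℝ s) (hz : z ∈ s) (hx₀ : x₀ ∈ interior s)
    (hhz : DifferentiableAt ℝ h z) (hgrad : ∇ h z ≠ 0) : 0 < ⟪∇ h z, x₀ - z⟫ := by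
  set G := ∇ h z
  have hpush : ∀ᶠ c in 𝓝[>] (0 : ℝ), x₀ - c • G ∈ s := by
    have hcont : Continuous fun c : ℝ => x₀ - c • G := by fun_prop
    have hlim : Tendsto (fun c : ℝ => x₀ - c • G) (𝓝 0) (𝓝 x₀) := by
      simpa using hcont.tendsto 0
    exact nhdsWithin_le_nhds (hlim (mem_interior_iff_mem_nhds.mp hx₀))
  obtain ⟨c, hcs, hc⟩ := (hpush.and self_mem_nhdsWithin).exists
  have hfirst := hmin.inner_gradient_sub_nonneg hs hz hcs hhz
  have hsplit : ⟪G, x₀ - c • G - z⟫ = ⟪G, x₀ - z⟫ - c * ‖G‖ ^ 2 := by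
    rw [sub_right_comm, inner_sub_right, real_inner_smul_right, real_inner_self_eq_norm_sq]
  have hpos : 0 < c * ‖G‖ ^ 2 := mul_pos hc (by positivity)
  linarith

theorem inner_nonneg_of_tendsto_nonneg_combination {ι κ : Type*} [Fintype κ] {l : Filter ι}
    [l.NeBot] {v : ι → E} {w : κ → ι → E} {c : ι → κ → ℝ} {v₀ d : E} {w₀ : κ → E}
    (hv : Tendsto v l (𝓝 v₀)) (hw : ∀ j, Tendsto (w j) l (𝓝 (w₀ j)))
    (hvw : ∀ᶠ i in l, v i = ∑ j, c i j • w j i) (hc : ∀ᶠ i in l, ∀ j, 0 ≤ c i j)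
    (hd : ∀ j, 0 < ⟪w₀ j, d⟫ ∨ Tendsto (fun i => c i j) l (𝓝 0)) : 0 ≤ ⟪v₀, d⟫ := by
  have hterm : ∀ j, Tendsto (fun i => min (c i j * ⟪w j i, d⟫) 0) l (𝓝 0) := by
    intro j
    have hwd : Tendsto (fun i => ⟪w j i, d⟫) l (𝓝 ⟪w₀ j, d⟫) := (hw j).inner tendsto_const_nhds
    rcases hd j with hpos | hzero
    · refine tendsto_const_nhds.congr' ?_
      filter_upwards [hc, hwd.eventually (eventually_gt_nhds hpos)] with i hci hwi
      exact (min_eq_right (mul_nonneg (hci j) hwi.le)).symm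
    · simpa using (hzero.mul hwd).min (tendsto_const_nhds (x := (0 : ℝ)))
  have hsum : Tendsto (fun i => ∑ j, min (c i j * ⟪w j i, d⟫) 0) l (𝓝 0) := by
    simpa using tendsto_finsetSum Finset.univ fun j _ => hterm j
  refine le_of_tendsto_of_tendsto hsum (hv.inner tendsto_const_nhds) ?_
  filter_upwards [hvw] with i hi
  rw [hi, sum_inner]
  exact Finset.sum_le_sum fun j _ => by rw [real_inner_smul_left]; exact min_le_left _ _

theorem ContDiff.continuous_gradient [CompleteSpace E] {h : E → ℝ} {n : WithTop ℕ∞}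
    (hh : ContDiff ℝ n h) (hn : n ≠ 0) : Continuous (∇ h) :=
  (InnerProductSpace.toDual ℝ E).symm.continuous.comp (hh.continuous_fderiv hn)

section Barrier

variable [CompleteSpace E] {m : ℕ} {g : Fin m → E → ℝ} {f : E → ℝ} {x : ℝ → E} {l : Filter ℝ}
  [l.NeBot] {xb : E}

theorem inner_gradient_nonneg_of_tendsto_barrier_stationary
    (hg : ∀ j, ContDiff ℝ 1 (g j)) (hf : ContDiff ℝ 1 f) (hl : l ≤ 𝓝[>] 0)
    (hfeas : ∀ μ ∈ Ioi (0:ℝ), ∀ j, 0 < g j (x μ))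
    (hstat : ∀ μ ∈ Ioi (0:ℝ), ∇ f (x μ) = ∑ j, (μ / g j (x μ)) • ∇ (g j) (x μ))
    (hx : Tendsto x l (𝓝 xb)) {d : E} (hd : ∀ j, g j xb = 0 → 0 < ⟪∇ (g j) xb, d⟫) :
    0 ≤ ⟪∇ f xb, d⟫ := by
  have hpos : ∀ᶠ μ in l, μ ∈ Ioi (0:ℝ) := hl self_mem_nhdsWithin
  refine inner_nonneg_of_tendsto_nonneg_combination (c := fun μ j => μ / g j (x μ))
    ((hf.continuous_gradient one_ne_zero).tendsto xb |>.comp hx)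
    (fun j => (hg j).continuous_gradient one_ne_zero |>.tendsto xb |>.comp hx)
    (hpos.mono hstat) (hpos.mono fun μ hμ j => div_nonneg hμ.le (hfeas μ hμ j).le) fun j => ?_
  by_cases hj : g j xb = 0
  · exact .inl (hd j hj)
  · have hμ : Tendsto id l (𝓝 0) := hl.trans nhdsWithin_le_nhds
    right
    simpa [Function.comp_def, Pi.div_def] using
      hμ.div ((hg j).continuous.tendsto xb |>.comp hx) hj

theorem isMinOn_of_tendsto_barrier_stationary {K : Set E} (hK : K = {x | ∀ j, 0 ≤ g j x})
    (hg : ∀ j, ContDiff ℝ 1 (g j)) (hf : ContDiff ℝ 1 f) (hfconv : ConvexOn ℝ K f)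
    (hKconv : Convex ℝ K) (slater : ∃ x₀, ∀ j, 0 < g j x₀)
    (nondeg : ∀ j, ∀ x ∈ K, g j x = 0 → ∇ (g j) x ≠ 0) (hl : l ≤ 𝓝[>] 0)
    (hfeas : ∀ μ ∈ Ioi (0:ℝ), ∀ j, 0 < g j (x μ))
    (hstat : ∀ μ ∈ Ioi (0:ℝ), ∇ f (x μ) = ∑ j, (μ / g j (x μ)) • ∇ (g j) (x μ))
    (hx : Tendsto x l (𝓝 xb)) (hxb : xb ∈ K) :
    IsMinOn f K xb := by
  obtain ⟨x₀, hx₀⟩ := slater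
  have hx₀K : x₀ ∈ interior K :=
    hK ▸ mem_interior_setOf_forall_nonneg (fun j => (hg j).continuous) hx₀
  have hvariational : ∀ y ∈ K, 0 ≤ ⟪∇ f xb, y - xb⟫ := by
    intro y hy
    have hshift : ∀ t > (0:ℝ), 0 ≤ ⟪∇ f xb, y - xb + t • (x₀ - xb)⟫ := by
      intro t ht
      refine inner_gradient_nonneg_of_tendsto_barrier_stationary hg hf hl hfeas hstat hx
        fun j hj => ?_
      have hminj : IsMinOn (g j) K xb := fun z hz => by rw [hK] at hz; simpa [hj] using hz j
      have hdiff : DifferentiableAt ℝ (g j) xb := (hg j).differentiable one_ne_zero xb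
      have hy' := hminj.inner_gradient_sub_nonneg hKconv hxb hy hdiff
      have hx₀' := hminj.inner_gradient_sub_pos hKconv hxb hx₀K hdiff (nondeg j xb hxb hj)
      rw [inner_add_right, real_inner_smul_right]
      exact add_pos_of_nonneg_of_pos hy' (mul_pos ht hx₀')
    have hlim : Tendsto (fun t : ℝ => ⟪∇ f xb, y - xb + t • (x₀ - xb)⟫) (𝓝[>] 0)
        (𝓝 ⟪∇ f xb, y - xb⟫) := by
      have hcont : Continuous fun t : ℝ => ⟪∇ f xb, y - xb + t • (x₀ - xb)⟫ := by fun_prop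
      simpa using (hcont.tendsto 0).mono_left nhdsWithin_le_nhds
    exact ge_of_tendsto hlim (eventually_nhdsWithin_of_forall hshift)
  refine isMinOn_iff.mpr fun y hy => ?_
  have := hfconv.inner_gradient_sub_le hxb hy ((hf.differentiable one_ne_zero) xb)
  linarith [hvariational y hy]

end Barrier

end

theorem barrier_path_converges_to_unique_min_general (n m : ℕ)
    (g : Fin m → EuclideanSpace ℝ (Fin n) → ℝ)
    (f : EuclideanSpace ℝ (Fin n) → ℝ)
    (hg : ∀ j, ContDiff ℝ 1 (g j)) (hf : ContDiff ℝ 1 f)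
    (hfconv : ConvexOn ℝ Set.univ f)
    (K : Set (EuclideanSpace ℝ (Fin n)))
    (hKdef : K = {x | ∀ j, 0 ≤ g j x})
    (hKconv : Convex ℝ K) (hKcomp : IsCompact K)
    (slater : ∃ x₀, ∀ j, 0 < g j x₀)
    (nondeg : ∀ j, ∀ x ∈ K, g j x = 0 → gradient (g j) x ≠ 0)
    (xs : EuclideanSpace ℝ (Fin n))
    (huniq : ∀ y ∈ K, (∀ z ∈ K, f y ≤ f z) → y = xs)
    (x : ℝ → EuclideanSpace ℝ (Fin n))
    (hfeas : ∀ μ ∈ Set.Ioi (0:ℝ), ∀ j, 0 < g j (x μ))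
    (hstat : ∀ μ ∈ Set.Ioi (0:ℝ), gradient f (x μ) =
      ∑ j, (μ / g j (x μ)) • gradient (g j) (x μ)) :
    Tendsto x (nhdsWithin 0 (Set.Ioi 0)) (nhds xs) := by
  have hpathK : ∀ᶠ μ in 𝓝[>] 0, x μ ∈ K := by
    filter_upwards [self_mem_nhdsWithin] with μ hμ
    exact hKdef ▸ fun j => (hfeas μ hμ j).le
  refine hKcomp.tendsto_nhds_of_unique_mapClusterPt hpathK fun xb hxb hclus => ?_
  obtain ⟨U, hU, hxU⟩ := mapClusterPt_iff_ultrafilter.mp hclus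
  have hmin : IsMinOn f K xb := isMinOn_of_tendsto_barrier_stationary hKdef hg hf
    (hfconv.subset (subset_univ K) hKconv) hKconv slater nondeg hU hfeas hstat hxU hxb
  exact huniq xb hxb (isMinOn_iff.mp hmin)

theorem barrier_path_converges_to_unique_min (n m : ℕ)
    (g : Fin m → EuclideanSpace ℝ (Fin n) → ℝ)
    (f : EuclideanSpace ℝ (Fin n) → ℝ)
    (hg : ∀ j, ContDiff ℝ 1 (g j)) (hf : ContDiff ℝ 1 f)
    (hfconv : ConvexOn ℝ Set.univ f)
    (K : Set (EuclideanSpace ℝ (Fin n)))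
    (hKdef : K = {x | ∀ j, 0 ≤ g j x})
    (hKconv : Convex ℝ K) (hKcomp : IsCompact K)
    (slater : ∃ x₀, ∀ j, 0 < g j x₀)
    (nondeg : ∀ j, ∀ x ∈ K, g j x = 0 → gradient (g j) x ≠ 0)
    (xs : EuclideanSpace ℝ (Fin n)) (hxs : xs ∈ K)
    (hmin : ∀ y ∈ K, f xs ≤ f y)
    (huniq : ∀ y ∈ K, (∀ z ∈ K, f y ≤ f z) → y = xs)
    (x : ℝ → EuclideanSpace ℝ (Fin n))
    (hfeas : ∀ μ ∈ Set.Ioi (0:ℝ), ∀ j, 0 < g j (x μ))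
    (hstat : ∀ μ ∈ Set.Ioi (0:ℝ), gradient f (x μ) =
      ∑ j, (μ / g j (x μ)) • gradient (g j) (x μ)) :
    Tendsto x (nhdsWithin 0 (Set.Ioi 0)) (nhds xs) :=
  barrier_path_converges_to_unique_min_general n m g f hg hf hfconv K hKdef hKconv hKcomp slater
    nondeg xs huniq x hfeas hstat
end

section
/- Let K = {x ∈ ℝⁿ : gⱼ(x) ≥ 0, j=1,…,m} be convex and compact with all gⱼ C¹, satisfying Slater's condition and nondegeneracy, f convex C¹, and suppose (x_{μ_ℓ}) are stationary points of φ_{μ_ℓ} with μ_ℓ → 0 converging to x* ∈ K. If J = {j : gⱼ(x*) = 0} is nonempty, then for every j ∈ J the sequence of ratios μ_ℓ / gⱼ(x_{μ_ℓ}) is bounded. -/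
/-!
Let `x₀` be a Slater point and `d = x₀ - x*`. Pairing the stationarity equation with `d` gives
`⟪∇f(x_ℓ), d⟫ = ∑ⱼ (μ_ℓ / gⱼ(x_ℓ)) ⟪∇gⱼ(x_ℓ), d⟫`, whose left side converges. For an active
constraint `j`, `x*` minimises `gⱼ` on the convex set `K`, so `⟪∇gⱼ(x*), y - x*⟫ ≥ 0` for all
`y ∈ K`; since `K` contains a neighbourhood of `x₀` and `∇gⱼ(x*) ≠ 0`, this forces
`⟪∇gⱼ(x*), d⟫ > 0`. Hence the active terms of the sum are eventually nonnegative, the inactive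
ones tend to `0` (their multipliers do), and the sum bounds each active multiplier from above.
-/

open Filter Topology InnerProductSpace

theorem inner_sub_pos_of_eventually_nonneg {E : Type*} [NormedAddCommGroup E]
    [InnerProductSpace ℝ E] {G a x₀ : E} (hG : G ≠ 0)
    (h : ∀ᶠ y in 𝓝 x₀, 0 ≤ ⟪G, y - a⟫_ℝ) : 0 < ⟪G, x₀ - a⟫_ℝ := by
  have hpath : Tendsto (fun t : ℝ => x₀ - t • G) (𝓝[>] 0) (𝓝 x₀) := by
    have : Continuous fun t : ℝ => x₀ - t • G := by fun_prop
    exact (this.tendsto' 0 x₀ (by simp)).mono_left nhdsWithin_le_nhds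
  obtain ⟨t, ht, ht0⟩ := ((hpath.eventually h).and self_mem_nhdsWithin).exists
  have hGG : 0 < ⟪G, G⟫_ℝ := real_inner_self_pos.2 hG
  have : ⟪G, x₀ - t • G - a⟫_ℝ = ⟪G, x₀ - a⟫_ℝ - t * ⟪G, G⟫_ℝ := by
    rw [sub_right_comm, inner_sub_right, real_inner_smul_right]
  nlinarith [mul_pos (Set.mem_Ioi.1 ht0) hGG]

section Gradient

variable {E : Type*} [NormedAddCommGroup E] [InnerProductSpace ℝ E] [CompleteSpace E]

theorem IsMinOn.inner_gradient_sub_nonneg_s11 {g : E → ℝ} {K : Set E} {a y : E}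
    (hK : Convex ℝ K) (hmin : IsMinOn g K a) (hg : DifferentiableAt ℝ g a)
    (ha : a ∈ K) (hy : y ∈ K) : 0 ≤ ⟪gradient g a, y - a⟫_ℝ := by
  rw [inner_gradient_left]
  exact hmin.localize.hasFDerivWithinAt_nonneg hg.hasFDerivAt.hasFDerivWithinAt
    (sub_mem_posTangentConeAt_of_segment_subset (hK.segment_subset ha hy))

theorem ContDiff.continuous_inner_gradient_left {h : E → ℝ} (hh : ContDiff ℝ 1 h) (v : E) :
    Continuous fun y => ⟪gradient h y, v⟫_ℝ := by
  simp only [inner_gradient_left]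
  exact (hh.continuous_fderiv one_ne_zero).clm_apply continuous_const

end Gradient

theorem bddAbove_range_of_bddAbove_sum_mul {ι : Type*} [Fintype ι] {lam a : ι → ℕ → ℝ}
    {aLim : ι → ℝ} (hlam : ∀ k ℓ, 0 ≤ lam k ℓ) (ha : ∀ k, Tendsto (a k) atTop (𝓝 (aLim k)))
    (hdich : ∀ k, 0 < aLim k ∨ Tendsto (lam k) atTop (𝓝 0))
    (hsum : BddAbove (Set.range fun ℓ => ∑ k, lam k ℓ * a k ℓ)) {j : ι} (hj : 0 < aLim j) :
    BddAbove (Set.range (lam j)) := by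
  obtain ⟨A, hA⟩ := hsum
  have hterm : ∀ k, ∀ᶠ ℓ in atTop, -1 ≤ lam k ℓ * a k ℓ := by
    intro k
    rcases hdich k with hk | hk
    · filter_upwards [(ha k).eventually (eventually_gt_nhds hk)] with ℓ hℓ
      nlinarith [mul_nonneg (hlam k ℓ) hℓ.le]
    · have : Tendsto (fun ℓ => lam k ℓ * a k ℓ) atTop (𝓝 0) := by
        simpa using hk.mul (ha k)
      exact this.eventually (eventually_ge_nhds (by norm_num))
  have hsmall : ∀ᶠ ℓ in atTop, aLim j / 2 ≤ a j ℓ :=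
    (ha j).eventually (eventually_ge_nhds (by linarith))
  refine (isBoundedUnder_of_eventually_le
    (a := 2 * (A + Fintype.card ι) / aLim j) ?_).bddAbove_range
  filter_upwards [eventually_all.2 hterm, hsmall] with ℓ hterm hsmall
  -- Shifting every term by `1` makes it nonnegative, so the `j`-th term is at most the sum.
  have hshift : lam j ℓ * a j ℓ + 1 ≤ ∑ k, (lam k ℓ * a k ℓ + 1) :=
    Finset.single_le_sum (f := fun k => lam k ℓ * a k ℓ + 1)
      (fun k _ => by linarith [hterm k]) (Finset.mem_univ j)
  have hsumA : ∑ k, lam k ℓ * a k ℓ ≤ A := hA (Set.mem_range_self ℓ)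
  rw [Finset.sum_add_distrib] at hshift
  simp only [Finset.sum_const, Finset.card_univ, nsmul_eq_mul, mul_one] at hshift
  rw [le_div_iff₀ hj]
  nlinarith [mul_le_mul_of_nonneg_left hsmall (hlam j ℓ)]

theorem barrier_multiplier_ratios_bounded_general (n m : ℕ)
    (g : Fin m → EuclideanSpace ℝ (Fin n) → ℝ)
    (f : EuclideanSpace ℝ (Fin n) → ℝ)
    (hg : ∀ j, ContDiff ℝ 1 (g j)) (hf : ContDiff ℝ 1 f)
    (K : Set (EuclideanSpace ℝ (Fin n)))
    (hKdef : K = {x | ∀ j, 0 ≤ g j x})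
    (hKconv : Convex ℝ K)
    (slater : ∃ x₀, ∀ j, 0 < g j x₀)
    (nondeg : ∀ j, ∀ x ∈ K, g j x = 0 → gradient (g j) x ≠ 0)
    (μ : ℕ → ℝ) (hμpos : ∀ ℓ, 0 < μ ℓ)
    (hμ0 : Tendsto μ atTop (nhds 0))
    (x : ℕ → EuclideanSpace ℝ (Fin n))
    (hfeas : ∀ ℓ j, 0 < g j (x ℓ))
    (hstat : ∀ ℓ, gradient f (x ℓ) =
      ∑ j, (μ ℓ / g j (x ℓ)) • gradient (g j) (x ℓ))
    (xs : EuclideanSpace ℝ (Fin n)) (hxs : xs ∈ K)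
    (hlim : Tendsto x atTop (nhds xs)) :
    ∀ j, g j xs = 0 → ∃ C : ℝ, ∀ ℓ, μ ℓ / g j (x ℓ) ≤ C := by
  obtain ⟨x₀, hx₀⟩ := slater
  subst hKdef
  have hx₀K : ∀ᶠ y in 𝓝 x₀, ∀ k, 0 ≤ g k y := eventually_all.2 fun k =>
    ((hg k).continuous.continuousAt.eventually (lt_mem_nhds (hx₀ k))).mono fun _ h => h.le
  have hactive : ∀ k, g k xs = 0 → 0 < ⟪gradient (g k) xs, x₀ - xs⟫_ℝ := fun k hk =>
    inner_sub_pos_of_eventually_nonneg (nondeg k xs hxs hk) <| hx₀K.mono fun y hy =>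
      IsMinOn.inner_gradient_sub_nonneg_s11 hKconv (fun z hz => hk ▸ hz k)
        ((hg k).differentiable one_ne_zero xs) hxs hy
  have hpair : ∀ h : EuclideanSpace ℝ (Fin n) → ℝ, ContDiff ℝ 1 h →
      Tendsto (fun ℓ => ⟪gradient h (x ℓ), x₀ - xs⟫_ℝ) atTop (𝓝 ⟪gradient h xs, x₀ - xs⟫_ℝ) :=
    fun h hh => ((hh.continuous_inner_gradient_left _).tendsto xs).comp hlim
  have hsum : BddAbove (Set.range fun ℓ =>
      ∑ k, μ ℓ / g k (x ℓ) * ⟪gradient (g k) (x ℓ), x₀ - xs⟫_ℝ) := by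
    simpa only [hstat, sum_inner, real_inner_smul_left] using (hpair f hf).bddAbove_range
  intro j hj
  obtain ⟨C, hC⟩ := bddAbove_range_of_bddAbove_sum_mul (lam := fun k ℓ => μ ℓ / g k (x ℓ))
    (fun k ℓ => (div_pos (hμpos ℓ) (hfeas ℓ k)).le) (fun k => hpair (g k) (hg k))
    (fun k => (eq_or_ne (g k xs) 0).imp (hactive k) fun hk =>
      zero_div (g k xs) ▸ hμ0.div (((hg k).continuous.tendsto xs).comp hlim) hk)
    hsum (hactive j hj)
  exact ⟨C, fun ℓ => hC (Set.mem_range_self ℓ)⟩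

theorem barrier_multiplier_ratios_bounded (n m : ℕ)
    (g : Fin m → EuclideanSpace ℝ (Fin n) → ℝ)
    (f : EuclideanSpace ℝ (Fin n) → ℝ)
    (hg : ∀ j, ContDiff ℝ 1 (g j)) (hf : ContDiff ℝ 1 f)
    (hfconv : ConvexOn ℝ Set.univ f)
    (K : Set (EuclideanSpace ℝ (Fin n)))
    (hKdef : K = {x | ∀ j, 0 ≤ g j x})
    (hKconv : Convex ℝ K) (hKcomp : IsCompact K)
    (slater : ∃ x₀, ∀ j, 0 < g j x₀)
    (nondeg : ∀ j, ∀ x ∈ K, g j x = 0 → gradient (g j) x ≠ 0)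
    (μ : ℕ → ℝ) (hμpos : ∀ ℓ, 0 < μ ℓ)
    (hμ0 : Tendsto μ atTop (nhds 0))
    (x : ℕ → EuclideanSpace ℝ (Fin n))
    (hfeas : ∀ ℓ j, 0 < g j (x ℓ))
    (hstat : ∀ ℓ, gradient f (x ℓ) =
      ∑ j, (μ ℓ / g j (x ℓ)) • gradient (g j) (x ℓ))
    (xs : EuclideanSpace ℝ (Fin n)) (hxs : xs ∈ K)
    (hlim : Tendsto x atTop (nhds xs))
    (hJ : ∃ j, g j xs = 0) :
    ∀ j, g j xs = 0 → ∃ C : ℝ, ∀ ℓ, μ ℓ / g j (x ℓ) ≤ C :=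
  barrier_multiplier_ratios_bounded_general n m g f hg hf K hKdef hKconv slater nondeg μ hμpos hμ0 x
    hfeas hstat xs hxs hlim
end
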